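/- arXiv:1106.3984 — 2 statements merged into one kernel-verified Lean document; each statement's English description precedes it below -/
import Mathlib

section
/- Under the assumptions of Theorem 1 (GG identities and R generated from i.i.d. samples on the sphere of radius √q_k with the described value distribution), the conditioned array Q also satisfies the Ghirlanda–Guerra identities: for every n ≥ 2, bounded measurable f of the first n×n overlaps, and every p ≥ 1, E[f(Q^n) Q_{1,n+1}^p] = (1/n) E[f(Q^n)] E[Q_{1,2}^p] + (1/n) Σ_{l=2}^{n} E[f(Q^n) Q_{1,l}^p]. -/
open MeasureTheory
open scoped RealInnerProductSpace

/-- The event that the first `n` replicas are pairwise distinct. -/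
def distinctEvent {Ω X : Type*} (σ : ℕ → Ω → X) (n : ℕ) : Set Ω :=
  {ω | ∀ i j, i < n → j < n → i ≠ j → σ i ω ≠ σ j ω}

/-!
Write `A_m` for the event that replicas `0, …, m-1` are pairwise distinct and
`p = ℙ(R_{0,1} = q)`. Since replicas coincide exactly when their overlap is `q`, the GG identity
with `ψ = 1_{q}`, applied to a test function supported on `A_m`, says that replica `m` coincides
with replica `0` with weight `p/m`, and by exchangeability the same holds for every `l < m`. On
`A_m`, replica `m` is either new (the event `A_{m+1}`) or equal to exactly one earlier replica `l`,
and then `R_{0,m} = R_{0,l}`. Subtracting these coincidence terms from the GG identity leaves the GG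
identity integrated over `A_{m+1}`, with the weight of the sum scaled by `1 - p = ℙ(A_2)`; for
trivial test functions it gives `ℙ(A_{m+1}) = ℙ(A_2) ℙ(A_m)`. Dividing by `ℙ(A_{m+1})` is passing
to the law of `Q`.
-/

namespace ConditionedGG

open Finset

/-- Stated for an arbitrary array `R` under an arbitrary measure `ν`, so that it covers both the
overlaps under `ℙ` and the coordinate array under the law `μ` of `Q`. -/
def GGIdentity {Ω : Type*} [MeasurableSpace Ω] (ν : Measure Ω) (R : ℕ → ℕ → Ω → ℝ) (m : ℕ)
    (f : (Fin m → Fin m → ℝ) → ℝ) (ψ : ℝ → ℝ) : Prop :=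
  ∫ ω, f (fun i j : Fin m => R i j ω) * ψ (R 0 m ω) ∂ν
    = (1 / m) * (∫ ω, f (fun i j : Fin m => R i j ω) ∂ν) * (∫ ω, ψ (R 0 1 ω) ∂ν)
      + (1 / m) * ∑ l ∈ Ico 1 m, ∫ ω, f (fun i j : Fin m => R i j ω) * ψ (R 0 l ω) ∂ν

theorem GGIdentity.congr_ae {Ω : Type*} [MeasurableSpace Ω] {ν : Measure Ω}
    {R : ℕ → ℕ → Ω → ℝ} {m : ℕ} {f : (Fin m → Fin m → ℝ) → ℝ} {ψ ψ' : ℝ → ℝ}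
    (hGG : GGIdentity ν R m f ψ) (hψ : ∀ l, ∀ᵐ ω ∂ν, ψ (R 0 l ω) = ψ' (R 0 l ω)) :
    GGIdentity ν R m f ψ' := by
  have hmoment : ∀ l, ∫ ω, f (fun i j : Fin m => R i j ω) * ψ (R 0 l ω) ∂ν
      = ∫ ω, f (fun i j : Fin m => R i j ω) * ψ' (R 0 l ω) ∂ν := fun l =>
    integral_congr_ae ((hψ l).mono fun ω hω => by simp only [hω])
  unfold GGIdentity at hGG ⊢
  rwa [hmoment, integral_congr_ae (hψ 1), sum_congr rfl fun l _ => hmoment l] at hGG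

lemma integrable_of_abs_le {α : Type*} [MeasurableSpace α] {ν : Measure α} [IsFiniteMeasure ν]
    {F : α → ℝ} (hF : Measurable F) {C : ℝ} (hC : ∀ x, |F x| ≤ C) : Integrable F ν :=
  .of_bound hF.aestronglyMeasurable C (.of_forall hC)

lemma abs_real_inner_le_of_inner_self_eq {H : Type*} [NormedAddCommGroup H]
    [InnerProductSpace ℝ H] {x y : H} {q : ℝ} (hx : ⟪x, x⟫ = q) (hy : ⟪y, y⟫ = q) :
    |⟪x, y⟫| ≤ q := by
  rw [real_inner_self_eq_norm_sq] at hx hy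
  nlinarith [abs_real_inner_le_norm x y, sq_nonneg (‖x‖ - ‖y‖)]

lemma abs_indicator_Icc_pow_le (q : ℝ) (p : ℕ) (t : ℝ) :
    |(Set.Icc (-q) q).indicator (· ^ p) t| ≤ |q| ^ p := by
  by_cases ht : t ∈ Set.Icc (-q) q
  · rw [Set.indicator_of_mem ht, abs_pow]
    exact pow_le_pow_left₀ (abs_nonneg t) ((abs_le.2 ht).trans (le_abs_self q)) p
  · rw [Set.indicator_of_notMem ht, abs_zero]
    positivity

/-- Since `q` is the self-overlap, `coincidence q (R l m ω) = 1` exactly when replicas `l` and `m`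
coincide. -/
noncomputable def coincidence (q : ℝ) : ℝ → ℝ := ({q} : Set ℝ).indicator 1

lemma measurable_coincidence (q : ℝ) : Measurable (coincidence q) :=
  measurable_one.indicator (measurableSet_singleton q)

lemma coincidence_self (q : ℝ) : coincidence q q = 1 := by simp [coincidence]

lemma coincidence_of_ne {q t : ℝ} (h : t ≠ q) : coincidence q t = 0 := by simp [coincidence, h]

lemma abs_coincidence_le_one (q t : ℝ) : |coincidence q t| ≤ 1 := by
  by_cases h : t = q
  · simp [h, coincidence_self]
  · simp [coincidence_of_ne h]

def distinctArrays (q : ℝ) (m : ℕ) : Set (Fin m → Fin m → ℝ) :=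
  {x | ∀ i j, i ≠ j → x i j ≠ q}

lemma measurableSet_distinctArrays (q : ℝ) (m : ℕ) : MeasurableSet (distinctArrays q m) := by
  unfold distinctArrays
  measurability

lemma mem_distinctArrays_of_comp_perm {q : ℝ} {m : ℕ} {x : Fin m → Fin m → ℝ}
    (τ : Equiv.Perm (Fin m)) (hx : (fun i j => x (τ i) (τ j)) ∈ distinctArrays q m) :
    x ∈ distinctArrays q m := fun i j hij => by
  simpa using hx (τ.symm i) (τ.symm j) (τ.symm.injective.ne hij)

section DistinctEvent

variable {Ω X : Type*} {σ : ℕ → Ω → X} {R : ℕ → ℕ → Ω → ℝ} {q : ℝ}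

lemma distinctEvent_succ_subset (m : ℕ) : distinctEvent σ (m + 1) ⊆ distinctEvent σ m :=
  fun _ hω i j hi hj => hω i j (by omega) (by omega)

lemma exists_eq_of_mem_distinctEvent {m : ℕ} {ω : Ω} (hω : ω ∈ distinctEvent σ m)
    (hnew : ω ∉ distinctEvent σ (m + 1)) : ∃ l < m, σ l ω = σ m ω := by
  simp only [distinctEvent, Set.mem_ofPred_eq, not_forall, not_not] at hnew
  obtain ⟨i, j, hi, hj, hij, hσ⟩ := hnew
  rcases Nat.lt_succ_iff_lt_or_eq.1 hi with hi | rfl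
  · rcases Nat.lt_succ_iff_lt_or_eq.1 hj with hj | rfl
    · exact absurd hσ (hω i j hi hj hij)
    · exact ⟨i, hi, hσ⟩
  · exact ⟨j, by omega, hσ.symm⟩

lemma distinctEvent_eq_preimage (heq : ∀ l l', l ≠ l' → ∀ ω, (R l l' ω = q ↔ σ l ω = σ l' ω))
    (m : ℕ) :
    distinctEvent σ m = (fun ω => fun i j : Fin m => R i j ω) ⁻¹' distinctArrays q m := by
  ext ω
  constructor
  · intro hω i j hij hq
    have hij' : (i : ℕ) ≠ j := Fin.val_ne_of_ne hij
    exact hω i j i.isLt j.isLt hij' ((heq i j hij' ω).1 hq)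
  · intro hω i j hi hj hij hσ
    exact hω ⟨i, hi⟩ ⟨j, hj⟩ (by simpa using hij) ((heq i j hij ω).2 hσ)

lemma distinctEvent_two (heq : ∀ l l', l ≠ l' → ∀ ω, (R l l' ω = q ↔ σ l ω = σ l' ω)) :
    distinctEvent σ 2 = {ω | R 0 1 ω = q}ᶜ := by
  ext ω
  have h01 := heq 0 1 zero_ne_one ω
  constructor
  · exact fun hω hq => hω 0 1 two_pos one_lt_two zero_ne_one (h01.1 hq)
  · intro hω i j hi hj hij hσ
    interval_cases i <;> interval_cases j
    · exact hij rfl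
    · exact hω (h01.2 hσ)
    · exact hω (h01.2 hσ.symm)
    · exact hij rfl

variable [MeasurableSpace Ω] {ℙ : Measure Ω}

lemma measurableSet_distinctEvent
    (heq : ∀ l l', l ≠ l' → ∀ ω, (R l l' ω = q ↔ σ l ω = σ l' ω))
    (hmeas : ∀ l l', Measurable (R l l')) (m : ℕ) : MeasurableSet (distinctEvent σ m) := by
  rw [distinctEvent_eq_preimage heq]
  exact (by fun_prop : Measurable fun ω => fun i j : Fin m => R i j ω)
    (measurableSet_distinctArrays q m)

lemma setIntegral_distinctEvent_two [IsFiniteMeasure ℙ]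
    (heq : ∀ l l', l ≠ l' → ∀ ω, (R l l' ω = q ↔ σ l ω = σ l' ω))
    (hmeas : ∀ l l', Measurable (R l l')) {φ : ℝ → ℝ} (hφ : Measurable φ)
    (hφb : ∃ C, ∀ x, |φ x| ≤ C) :
    ∫ ω in distinctEvent σ 2, φ (R 0 1 ω) ∂ℙ
      = ∫ ω, φ (R 0 1 ω) ∂ℙ - ℙ.real {ω | R 0 1 ω = q} * φ q := by
  obtain ⟨C, hC⟩ := hφb
  have hS : MeasurableSet {ω | R 0 1 ω = q} := hmeas 0 1 (measurableSet_singleton q)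
  have hint : Integrable (fun ω => φ (R 0 1 ω)) ℙ :=
    integrable_of_abs_le (hφ.comp (hmeas 0 1)) fun ω => hC _
  rw [distinctEvent_two heq, ← integral_add_compl hS.compl hint, compl_compl,
    setIntegral_congr_fun hS fun ω (hω : R 0 1 ω = q) => by rw [hω], setIntegral_const,
    smul_eq_mul]
  ring

lemma measureReal_distinctEvent_two [IsProbabilityMeasure ℙ]
    (heq : ∀ l l', l ≠ l' → ∀ ω, (R l l' ω = q ↔ σ l ω = σ l' ω))
    (hmeas : ∀ l l', Measurable (R l l')) :
    ℙ.real (distinctEvent σ 2) = 1 - ℙ.real {ω | R 0 1 ω = q} := by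
  have hS : MeasurableSet {ω | R 0 1 ω = q} := hmeas 0 1 (measurableSet_singleton q)
  rw [distinctEvent_two heq, probReal_compl_eq_one_sub hS]

end DistinctEvent

section Overlaps

variable {Ω H : Type*} [NormedAddCommGroup H] [InnerProductSpace ℝ H] {σ : ℕ → Ω → H}
  {R : ℕ → ℕ → Ω → ℝ} {q : ℝ}

/-- On `A_m`, replica `m` is either new or coincides with exactly one earlier replica `l`, and
then `R 0 l = R 0 m`. -/
lemma sum_coincidence_mul_eq_indicator (hR : ∀ l l' ω, R l l' ω = ⟪σ l ω, σ l' ω⟫)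
    (heq : ∀ l l', l ≠ l' → ∀ ω, (R l l' ω = q ↔ σ l ω = σ l' ω)) {m : ℕ} {ω : Ω}
    (hω : ω ∈ distinctEvent σ m) (φ : ℝ → ℝ) :
    ∑ l ∈ range m, coincidence q (R l m ω) * φ (R 0 l ω)
      = (distinctEvent σ (m + 1))ᶜ.indicator (fun ω => φ (R 0 m ω)) ω := by
  have hne : ∀ l < m, σ l ω ≠ σ m ω → coincidence q (R l m ω) = 0 :=
    fun l hl hσ => coincidence_of_ne fun hq => hσ ((heq l m hl.ne ω).1 hq)
  by_cases hnew : ω ∈ distinctEvent σ (m + 1)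
  · rw [Set.indicator_of_notMem (Set.notMem_compl_iff.2 hnew)]
    refine sum_eq_zero fun l hl => ?_
    have hlm := mem_range.1 hl
    rw [hne l hlm (hnew l m (by omega) (by omega) hlm.ne), zero_mul]
  · obtain ⟨l₀, hl₀, hσ⟩ := exists_eq_of_mem_distinctEvent hω hnew
    rw [Set.indicator_of_mem hnew, sum_eq_single_of_mem l₀ (mem_range.2 hl₀)]
    · rw [(heq l₀ m hl₀.ne ω).2 hσ, coincidence_self, one_mul, hR 0 l₀, hR 0 m, hσ]
    · intro l hl hll₀
      have hlm := mem_range.1 hl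
      rw [hne l hlm fun h => hω l l₀ hlm hl₀ hll₀ (h.trans hσ.symm), zero_mul]

variable [MeasurableSpace Ω] {ℙ : Measure Ω}

lemma integral_coincidence (hR01 : Measurable (R 0 1)) :
    ∫ ω, coincidence q (R 0 1 ω) ∂ℙ = ℙ.real {ω | R 0 1 ω = q} :=
  integral_indicator_one (hR01 (measurableSet_singleton q))

/-- For `h` supported on distinct replicas, the coincidence terms `l ≥ 1` of the GG identity
vanish. -/
lemma integral_mul_coincidence_zero (hR01 : Measurable (R 0 1)) {m : ℕ}
    {h : (Fin m → Fin m → ℝ) → ℝ} (hsupp : ∀ x ∉ distinctArrays q m, h x = 0)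
    (hGG : GGIdentity ℙ R m h (coincidence q)) :
    ∫ ω, h (fun i j : Fin m => R i j ω) * coincidence q (R 0 m ω) ∂ℙ
      = ℙ.real {ω | R 0 1 ω = q} / m * ∫ ω, h (fun i j : Fin m => R i j ω) ∂ℙ := by
  have hvanish : ∀ l ∈ Ico 1 m,
      ∫ ω, h (fun i j : Fin m => R i j ω) * coincidence q (R 0 l ω) ∂ℙ = 0 := by
    intro l hl
    obtain ⟨hl1, hlm⟩ := mem_Ico.1 hl
    refine integral_eq_zero_of_ae (.of_forall fun ω => ?_)
    by_cases hq : R 0 l ω = q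
    · have hR : (fun i j : Fin m => R i j ω) ∉ distinctArrays q m :=
        fun hD => hD ⟨0, by omega⟩ ⟨l, hlm⟩ (by simp [Fin.ext_iff]; omega) hq
      simp [hsupp _ hR]
    · simp [coincidence_of_ne hq]
  rw [hGG, sum_eq_zero hvanish, integral_coincidence hR01]
  ring

lemma integral_comp_perm {M : ℕ} {ρ : Equiv.Perm (Fin M)}
    (hρ : Measure.map (fun ω => fun i j : Fin M => R (ρ i) (ρ j) ω) ℙ
      = Measure.map (fun ω => fun i j : Fin M => R i j ω) ℙ)
    (hmeas : ∀ l l', Measurable (R l l')) {G : (Fin M → Fin M → ℝ) → ℝ} (hG : Measurable G) :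
    ∫ ω, G (fun i j : Fin M => R (ρ i) (ρ j) ω) ∂ℙ = ∫ ω, G (fun i j : Fin M => R i j ω) ∂ℙ := by
  rw [← integral_map (by fun_prop) hG.aestronglyMeasurable, hρ,
    integral_map (by fun_prop) hG.aestronglyMeasurable]

/-- Exchangeability transports the case `l = 0` to every `l < m`, swapping `0` and `l`. -/
lemma integral_mul_coincidence (hmeas : ∀ l l', Measurable (R l l'))
    (hexch : ∀ (m : ℕ) (ρ : Equiv.Perm (Fin m)),
      Measure.map (fun ω => fun i j : Fin m => R (ρ i) (ρ j) ω) ℙ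
        = Measure.map (fun ω => fun i j : Fin m => R i j ω) ℙ)
    {m : ℕ} {h : (Fin m → Fin m → ℝ) → ℝ} (hh : Measurable h)
    (hsupp : ∀ x ∉ distinctArrays q m, h x = 0)
    (hGG : ∀ τ : Equiv.Perm (Fin m),
      GGIdentity ℙ R m (fun x => h fun i j => x (τ i) (τ j)) (coincidence q))
    (l : Fin m) :
    ∫ ω, h (fun i j : Fin m => R i j ω) * coincidence q (R l m ω) ∂ℙ
      = ℙ.real {ω | R 0 1 ω = q} / m * ∫ ω, h (fun i j : Fin m => R i j ω) ∂ℙ := by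
  let τ : Equiv.Perm (Fin m) := Equiv.swap ⟨0, l.pos⟩ l
  let ρ : Equiv.Perm (Fin (m + 1)) := Equiv.swap (Fin.castSucc ⟨0, l.pos⟩) l.castSucc
  let G : (Fin (m + 1) → Fin (m + 1) → ℝ) → ℝ := fun y =>
    h (fun i j => y i.castSucc j.castSucc) * coincidence q (y l.castSucc (Fin.last m))
  have hG : Measurable G :=
    (hh.comp (by fun_prop)).mul ((measurable_coincidence q).comp (by fun_prop))
  have hGρ : ∀ ω, G (fun i j => R (ρ i) (ρ j) ω)
      = h (fun i j : Fin m => R (τ i) (τ j) ω) * coincidence q (R 0 m ω) := by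
    intro ω
    simp only [G, ρ, (Fin.castSucc_injective m).swap_apply, Equiv.swap_apply_right,
      Equiv.swap_apply_of_ne_of_ne (Fin.castSucc_lt_last _).ne' (Fin.castSucc_lt_last _).ne']
    rfl
  have hτsupp : ∀ x ∉ distinctArrays q m, h (fun i j => x (τ i) (τ j)) = 0 :=
    fun x hx => hsupp _ fun hτx => hx (mem_distinctArrays_of_comp_perm τ hτx)
  calc ∫ ω, h (fun i j : Fin m => R i j ω) * coincidence q (R l m ω) ∂ℙ
      = ∫ ω, G (fun i j => R (ρ i) (ρ j) ω) ∂ℙ := (integral_comp_perm (hexch _ ρ) hmeas hG).symm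
    _ = ∫ ω, h (fun i j : Fin m => R (τ i) (τ j) ω) * coincidence q (R 0 m ω) ∂ℙ := by
      simp_rw [hGρ]
    _ = ℙ.real {ω | R 0 1 ω = q} / m * ∫ ω, h (fun i j : Fin m => R (τ i) (τ j) ω) ∂ℙ :=
      integral_mul_coincidence_zero (hmeas 0 1) hτsupp (hGG τ)
    _ = _ := by rw [integral_comp_perm (hexch m τ) hmeas hh]

lemma integral_mul_eq_setIntegral_add_sum [IsFiniteMeasure ℙ]
    (hR : ∀ l l' ω, R l l' ω = ⟪σ l ω, σ l' ω⟫)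
    (heq : ∀ l l', l ≠ l' → ∀ ω, (R l l' ω = q ↔ σ l ω = σ l' ω))
    (hmeas : ∀ l l', Measurable (R l l')) {m : ℕ} {h : (Fin m → Fin m → ℝ) → ℝ}
    (hh : Measurable h) (hhb : ∃ C, ∀ x, |h x| ≤ C) (hsupp : ∀ x ∉ distinctArrays q m, h x = 0)
    {φ : ℝ → ℝ} (hφ : Measurable φ) (hφb : ∃ C, ∀ x, |φ x| ≤ C) :
    ∫ ω, h (fun i j : Fin m => R i j ω) * φ (R 0 m ω) ∂ℙ
      = (∫ ω in distinctEvent σ (m + 1), h (fun i j : Fin m => R i j ω) * φ (R 0 m ω) ∂ℙ)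
        + ∑ l ∈ range m,
            ∫ ω, h (fun i j : Fin m => R i j ω) * coincidence q (R l m ω) * φ (R 0 l ω) ∂ℙ := by
  obtain ⟨C, hC⟩ := hhb
  obtain ⟨D, hD⟩ := hφb
  have hhR : Integrable (fun ω => h fun i j : Fin m => R i j ω) ℙ :=
    integrable_of_abs_le (hh.comp (by fun_prop)) fun ω => hC _
  have hA := measurableSet_distinctEvent heq hmeas (m + 1)
  have hint : Integrable (fun ω => h (fun i j : Fin m => R i j ω) * φ (R 0 m ω)) ℙ :=
    hhR.mul_bdd (hφ.comp (hmeas 0 m)).aestronglyMeasurable (.of_forall fun _ => hD _)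
  have hintₗ : ∀ l, Integrable (fun ω =>
      h (fun i j : Fin m => R i j ω) * coincidence q (R l m ω) * φ (R 0 l ω)) ℙ := fun l =>
    (hhR.mul_bdd ((measurable_coincidence q).comp (hmeas l m)).aestronglyMeasurable
      (.of_forall fun _ => abs_coincidence_le_one q _)).mul_bdd
    (hφ.comp (hmeas 0 l)).aestronglyMeasurable (.of_forall fun _ => hD _)
  rw [← integral_add_compl hA hint, ← integral_finsetSum _ fun l _ => hintₗ l,
    ← integral_indicator hA.compl]
  congr 1
  refine integral_congr_ae (.of_forall fun ω => ?_)
  simp only [mul_assoc, ← mul_sum, Set.indicator_mul_right]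
  by_cases hω : ω ∈ distinctEvent σ m
  · rw [sum_coincidence_mul_eq_indicator hR heq hω]
  · rw [distinctEvent_eq_preimage heq] at hω
    simp [hsupp _ hω]

lemma integral_mul_coincidence_mul
    (hmeas : ∀ l l', Measurable (R l l'))
    (hexch : ∀ (m : ℕ) (ρ : Equiv.Perm (Fin m)),
      Measure.map (fun ω => fun i j : Fin m => R (ρ i) (ρ j) ω) ℙ
        = Measure.map (fun ω => fun i j : Fin m => R i j ω) ℙ)
    {m : ℕ}
    (hGG : ∀ f : (Fin m → Fin m → ℝ) → ℝ, Measurable f → (∃ C, ∀ x, |f x| ≤ C) →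
      ∀ ψ : ℝ → ℝ, Measurable ψ → (∃ C, ∀ x, |ψ x| ≤ C) → GGIdentity ℙ R m f ψ)
    {h : (Fin m → Fin m → ℝ) → ℝ} (hh : Measurable h) (hhb : ∃ C, ∀ x, |h x| ≤ C)
    (hsupp : ∀ x ∉ distinctArrays q m, h x = 0)
    {φ : ℝ → ℝ} (hφ : Measurable φ) (hφb : ∃ C, ∀ x, |φ x| ≤ C) {l : ℕ} (hl : l < m) :
    ∫ ω, h (fun i j : Fin m => R i j ω) * coincidence q (R l m ω) * φ (R 0 l ω) ∂ℙ
      = ℙ.real {ω | R 0 1 ω = q} / m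
        * ∫ ω, h (fun i j : Fin m => R i j ω) * φ (R 0 l ω) ∂ℙ := by
  obtain ⟨C, hC⟩ := hhb
  obtain ⟨D, hD⟩ := hφb
  let hₗ : (Fin m → Fin m → ℝ) → ℝ := fun x => h x * φ (x ⟨0, by omega⟩ ⟨l, hl⟩)
  have hₗmeas : Measurable hₗ := hh.mul (hφ.comp (by fun_prop))
  have hₗbound : ∀ x, |hₗ x| ≤ C * D := fun x => by
    rw [abs_mul]
    exact mul_le_mul (hC _) (hD _) (abs_nonneg _) ((abs_nonneg _).trans (hC x))
  have key := integral_mul_coincidence hmeas hexch hₗmeas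
    (fun x hx => by simp [hₗ, hsupp x hx])
    (fun τ => hGG _ (hₗmeas.comp (by fun_prop)) ⟨C * D, fun x => hₗbound _⟩
      _ (measurable_coincidence q) ⟨1, abs_coincidence_le_one q⟩) ⟨l, hl⟩
  simpa only [hₗ, mul_right_comm _ (φ _)] using key

lemma setIntegral_distinctEvent_succ_of_support [IsFiniteMeasure ℙ]
    (hR : ∀ l l' ω, R l l' ω = ⟪σ l ω, σ l' ω⟫)
    (heq : ∀ l l', l ≠ l' → ∀ ω, (R l l' ω = q ↔ σ l ω = σ l' ω)) (hdiag : ∀ ω, R 0 0 ω = q)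
    (hmeas : ∀ l l', Measurable (R l l'))
    (hexch : ∀ (m : ℕ) (ρ : Equiv.Perm (Fin m)),
      Measure.map (fun ω => fun i j : Fin m => R (ρ i) (ρ j) ω) ℙ
        = Measure.map (fun ω => fun i j : Fin m => R i j ω) ℙ)
    {m : ℕ} (hm : 0 < m)
    (hGG : ∀ f : (Fin m → Fin m → ℝ) → ℝ, Measurable f → (∃ C, ∀ x, |f x| ≤ C) →
      ∀ ψ : ℝ → ℝ, Measurable ψ → (∃ C, ∀ x, |ψ x| ≤ C) → GGIdentity ℙ R m f ψ)
    {h : (Fin m → Fin m → ℝ) → ℝ} (hh : Measurable h) (hhb : ∃ C, ∀ x, |h x| ≤ C)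
    (hsupp : ∀ x ∉ distinctArrays q m, h x = 0)
    {φ : ℝ → ℝ} (hφ : Measurable φ) (hφb : ∃ C, ∀ x, |φ x| ≤ C) :
    ∫ ω in distinctEvent σ (m + 1), h (fun i j : Fin m => R i j ω) * φ (R 0 m ω) ∂ℙ
      = 1 / m * (∫ ω, h (fun i j : Fin m => R i j ω) ∂ℙ)
          * ((∫ ω, φ (R 0 1 ω) ∂ℙ) - ℙ.real {ω | R 0 1 ω = q} * φ q)
        + (1 - ℙ.real {ω | R 0 1 ω = q}) / m
          * ∑ l ∈ Ico 1 m, ∫ ω, h (fun i j : Fin m => R i j ω) * φ (R 0 l ω) ∂ℙ := by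
  have hsplit := integral_mul_eq_setIntegral_add_sum (ℙ := ℙ) hR heq hmeas hh hhb hsupp hφ hφb
  have hdiag_term : ∫ ω, h (fun i j : Fin m => R i j ω) * φ (R 0 0 ω) ∂ℙ
      = (∫ ω, h (fun i j : Fin m => R i j ω) ∂ℙ) * φ q := by
    simp_rw [hdiag, integral_mul_const]
  rw [sum_congr rfl fun l hl => integral_mul_coincidence_mul hmeas hexch hGG hh hhb hsupp hφ hφb
      (mem_range.1 hl), ← mul_sum, range_eq_Ico, sum_eq_sum_Ico_succ_bot hm, zero_add,
    hdiag_term] at hsplit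
  have hGGm := hGG h hh hhb φ hφ hφb
  unfold GGIdentity at hGGm
  linear_combination hGGm - hsplit

lemma setIntegral_distinctEvent_succ [IsProbabilityMeasure ℙ]
    (hR : ∀ l l' ω, R l l' ω = ⟪σ l ω, σ l' ω⟫)
    (heq : ∀ l l', l ≠ l' → ∀ ω, (R l l' ω = q ↔ σ l ω = σ l' ω)) (hdiag : ∀ ω, R 0 0 ω = q)
    (hmeas : ∀ l l', Measurable (R l l'))
    (hexch : ∀ (m : ℕ) (ρ : Equiv.Perm (Fin m)),
      Measure.map (fun ω => fun i j : Fin m => R (ρ i) (ρ j) ω) ℙ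
        = Measure.map (fun ω => fun i j : Fin m => R i j ω) ℙ)
    {m : ℕ} (hm : 0 < m)
    (hGG : ∀ f : (Fin m → Fin m → ℝ) → ℝ, Measurable f → (∃ C, ∀ x, |f x| ≤ C) →
      ∀ ψ : ℝ → ℝ, Measurable ψ → (∃ C, ∀ x, |ψ x| ≤ C) → GGIdentity ℙ R m f ψ)
    {f : (Fin m → Fin m → ℝ) → ℝ} (hf : Measurable f) (hfb : ∃ C, ∀ x, |f x| ≤ C)
    {φ : ℝ → ℝ} (hφ : Measurable φ) (hφb : ∃ C, ∀ x, |φ x| ≤ C) :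
    ∫ ω in distinctEvent σ (m + 1), f (fun i j : Fin m => R i j ω) * φ (R 0 m ω) ∂ℙ
      = 1 / m * (∫ ω in distinctEvent σ m, f (fun i j : Fin m => R i j ω) ∂ℙ)
          * (∫ ω in distinctEvent σ 2, φ (R 0 1 ω) ∂ℙ)
        + ℙ.real (distinctEvent σ 2) / m * ∑ l ∈ Ico 1 m,
            ∫ ω in distinctEvent σ m, f (fun i j : Fin m => R i j ω) * φ (R 0 l ω) ∂ℙ := by
  obtain ⟨C, hC⟩ := hfb
  let h := (distinctArrays q m).indicator f
  have hA := measurableSet_distinctEvent heq hmeas m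
  have hhR : ∀ ω, h (fun i j : Fin m => R i j ω)
      = (distinctEvent σ m).indicator (fun ω => f fun i j : Fin m => R i j ω) ω := by
    intro ω
    rw [distinctEvent_eq_preimage heq]
    rfl
  have hrestrict : ∀ l, ∫ ω, h (fun i j : Fin m => R i j ω) * φ (R 0 l ω) ∂ℙ
      = ∫ ω in distinctEvent σ m, f (fun i j : Fin m => R i j ω) * φ (R 0 l ω) ∂ℙ := by
    intro l
    refine (integral_congr_ae (.of_forall fun ω => ?_)).trans (integral_indicator hA)
    rw [hhR]
    exact (Set.indicator_mul_left _ _ (fun ω => φ (R 0 l ω))).symm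
  have hsucc : ∫ ω in distinctEvent σ (m + 1), h (fun i j : Fin m => R i j ω) * φ (R 0 m ω) ∂ℙ
      = ∫ ω in distinctEvent σ (m + 1), f (fun i j : Fin m => R i j ω) * φ (R 0 m ω) ∂ℙ :=
    setIntegral_congr_fun (measurableSet_distinctEvent heq hmeas (m + 1)) fun ω hω => by
      rw [hhR, Set.indicator_of_mem (distinctEvent_succ_subset m hω)]
  have hI : ∫ ω, h (fun i j : Fin m => R i j ω) ∂ℙ
      = ∫ ω in distinctEvent σ m, f (fun i j : Fin m => R i j ω) ∂ℙ :=
    (integral_congr_ae (.of_forall hhR)).trans (integral_indicator hA)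
  rw [← hsucc, setIntegral_distinctEvent_succ_of_support hR heq hdiag hmeas hexch hm hGG
    (hf.indicator (measurableSet_distinctArrays q m))
    ⟨C, fun x => (norm_indicator_le_norm_self f x).trans (hC x)⟩
    (fun x hx => Set.indicator_of_notMem hx f) hφ hφb,
    setIntegral_distinctEvent_two heq hmeas hφ hφb, measureReal_distinctEvent_two heq hmeas, hI,
    sum_congr rfl fun l _ => hrestrict l]

lemma measureReal_distinctEvent_succ [IsProbabilityMeasure ℙ]
    (hR : ∀ l l' ω, R l l' ω = ⟪σ l ω, σ l' ω⟫)
    (heq : ∀ l l', l ≠ l' → ∀ ω, (R l l' ω = q ↔ σ l ω = σ l' ω)) (hdiag : ∀ ω, R 0 0 ω = q)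
    (hmeas : ∀ l l', Measurable (R l l'))
    (hexch : ∀ (m : ℕ) (ρ : Equiv.Perm (Fin m)),
      Measure.map (fun ω => fun i j : Fin m => R (ρ i) (ρ j) ω) ℙ
        = Measure.map (fun ω => fun i j : Fin m => R i j ω) ℙ)
    {m : ℕ} (hm : 0 < m)
    (hGG : ∀ f : (Fin m → Fin m → ℝ) → ℝ, Measurable f → (∃ C, ∀ x, |f x| ≤ C) →
      ∀ ψ : ℝ → ℝ, Measurable ψ → (∃ C, ∀ x, |ψ x| ≤ C) → GGIdentity ℙ R m f ψ) :
    ℙ.real (distinctEvent σ (m + 1)) = ℙ.real (distinctEvent σ 2) * ℙ.real (distinctEvent σ m) := by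
  have key := setIntegral_distinctEvent_succ hR heq hdiag hmeas hexch hm hGG
    (f := fun _ => 1) measurable_const ⟨1, by simp⟩ (φ := fun _ => 1) measurable_const ⟨1, by simp⟩
  simp only [mul_one, setIntegral_const, smul_eq_mul, sum_const, Nat.card_Ico, nsmul_eq_mul]
    at key
  rw [key, Nat.cast_pred hm]
  field_simp
  ring

lemma measureReal_distinctEvent_eq_pow [IsProbabilityMeasure ℙ]
    (hR : ∀ l l' ω, R l l' ω = ⟪σ l ω, σ l' ω⟫)
    (heq : ∀ l l', l ≠ l' → ∀ ω, (R l l' ω = q ↔ σ l ω = σ l' ω)) (hdiag : ∀ ω, R 0 0 ω = q)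
    (hmeas : ∀ l l', Measurable (R l l'))
    (hexch : ∀ (m : ℕ) (ρ : Equiv.Perm (Fin m)),
      Measure.map (fun ω => fun i j : Fin m => R (ρ i) (ρ j) ω) ℙ
        = Measure.map (fun ω => fun i j : Fin m => R i j ω) ℙ)
    (hGG : ∀ m, 2 ≤ m → ∀ f : (Fin m → Fin m → ℝ) → ℝ, Measurable f →
      (∃ C, ∀ x, |f x| ≤ C) → ∀ ψ : ℝ → ℝ, Measurable ψ → (∃ C, ∀ x, |ψ x| ≤ C) →
        GGIdentity ℙ R m f ψ)
    {m : ℕ} (hm : 2 ≤ m) :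
    ℙ.real (distinctEvent σ m) = ℙ.real (distinctEvent σ 2) ^ (m - 1) := by
  induction m, hm using Nat.le_induction with
  | base => simp
  | succ m hm ih =>
    rw [measureReal_distinctEvent_succ hR heq hdiag hmeas hexch (by omega) (hGG m hm), ih,
      ← pow_succ', Nat.sub_add_cancel (by omega), Nat.add_sub_cancel]

end Overlaps

section Conditioning

variable {Ω : Type*} [MeasurableSpace Ω] {ℙ : Measure Ω} {R : ℕ → ℕ → Ω → ℝ}
  {μ : Measure (ℕ → ℕ → ℝ)}

lemma integral_eq_setIntegral_of_map_eq {A : Set Ω} {m : ℕ}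
    (hμ : Measure.map (fun x => fun i j : Fin m => x i j) μ
      = (ℙ A)⁻¹ • Measure.map (fun ω => fun i j : Fin m => R i j ω) (ℙ.restrict A))
    (hmeas : ∀ l l', Measurable (R l l')) {G : (Fin m → Fin m → ℝ) → ℝ} (hG : Measurable G) :
    ∫ x, G (fun i j : Fin m => x i j) ∂μ
      = (ℙ.real A)⁻¹ * ∫ ω in A, G (fun i j : Fin m => R i j ω) ∂ℙ := by
  rw [← integral_map (by fun_prop : Measurable _).aemeasurable hG.aestronglyMeasurable, hμ,
    integral_smul_measure,
    integral_map (by fun_prop) hG.aestronglyMeasurable, ENNReal.toReal_inv, smul_eq_mul]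
  rfl

lemma ae_abs_le_of_map_eq {ν : Measure Ω} {c : ENNReal} {m : ℕ}
    (hμ : Measure.map (fun x => fun i j : Fin m => x i j) μ
      = c • Measure.map (fun ω => fun i j : Fin m => R i j ω) ν)
    (hmeas : ∀ l l', Measurable (R l l')) {q : ℝ} (hbound : ∀ l l' ω, |R l l' ω| ≤ q)
    (i j : Fin m) : ∀ᵐ x ∂μ, |x i j| ≤ q := by
  have hmap : ∀ᵐ y ∂(Measure.map (fun x => fun i j : Fin m => x i j) μ), |y i j| ≤ q := by
    rw [hμ]
    have hR : Measurable fun ω => fun i j : Fin m => R i j ω := by fun_prop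
    refine Measure.ae_smul_measure ((ae_map_iff hR.aemeasurable ?_).2 (.of_forall fun ω => ?_)) c
    · measurability
    · exact hbound i j ω
  exact ae_of_ae_map (by fun_prop : Measurable _).aemeasurable hmap

end Conditioning

theorem ggIdentity_conditioned {Ω H : Type*} [MeasurableSpace Ω] {ℙ : Measure Ω}
    [IsProbabilityMeasure ℙ] [NormedAddCommGroup H] [InnerProductSpace ℝ H] {σ : ℕ → Ω → H}
    {R : ℕ → ℕ → Ω → ℝ} {q : ℝ} (hR : ∀ l l' ω, R l l' ω = ⟪σ l ω, σ l' ω⟫)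
    (heq : ∀ l l', l ≠ l' → ∀ ω, (R l l' ω = q ↔ σ l ω = σ l' ω)) (hdiag : ∀ ω, R 0 0 ω = q)
    (hmeas : ∀ l l', Measurable (R l l'))
    (hexch : ∀ (m : ℕ) (ρ : Equiv.Perm (Fin m)),
      Measure.map (fun ω => fun i j : Fin m => R (ρ i) (ρ j) ω) ℙ
        = Measure.map (fun ω => fun i j : Fin m => R i j ω) ℙ)
    (hGG : ∀ m, 2 ≤ m → ∀ f : (Fin m → Fin m → ℝ) → ℝ, Measurable f →
      (∃ C, ∀ x, |f x| ≤ C) → ∀ ψ : ℝ → ℝ, Measurable ψ → (∃ C, ∀ x, |ψ x| ≤ C) →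
        GGIdentity ℙ R m f ψ)
    (hA₂ : ℙ.real (distinctEvent σ 2) ≠ 0) {μ : Measure (ℕ → ℕ → ℝ)}
    (hμ : ∀ n, Measure.map (fun x => fun i j : Fin n => x i j) μ
      = (ℙ (distinctEvent σ n))⁻¹
          • Measure.map (fun ω => fun i j : Fin n => R i j ω) (ℙ.restrict (distinctEvent σ n)))
    {n : ℕ} (hn : 2 ≤ n) {f : (Fin n → Fin n → ℝ) → ℝ} (hf : Measurable f)
    (hfb : ∃ C, ∀ x, |f x| ≤ C) {ψ : ℝ → ℝ} (hψ : Measurable ψ) (hψb : ∃ C, ∀ x, |ψ x| ≤ C) :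
    GGIdentity μ (fun i j x => x i j) n f ψ := by
  have hAₙ : ℙ.real (distinctEvent σ n) ≠ 0 := by
    rw [measureReal_distinctEvent_eq_pow hR heq hdiag hmeas hexch hGG hn]
    exact pow_ne_zero _ hA₂
  have hlast : ∫ x, f (fun i j : Fin n => x i j) * ψ (x 0 n) ∂μ
      = (ℙ.real (distinctEvent σ (n + 1)))⁻¹
        * ∫ ω in distinctEvent σ (n + 1), f (fun i j : Fin n => R i j ω) * ψ (R 0 n ω) ∂ℙ :=
    integral_eq_setIntegral_of_map_eq (hμ (n + 1)) hmeas (G := fun y =>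
      f (fun i j => y i.castSucc j.castSucc) * ψ (y ⟨0, by omega⟩ (Fin.last n))) (by fun_prop)
  have hmoment : ∀ l ∈ Ico 1 n, ∫ x, f (fun i j : Fin n => x i j) * ψ (x 0 l) ∂μ
      = (ℙ.real (distinctEvent σ n))⁻¹
        * ∫ ω in distinctEvent σ n, f (fun i j : Fin n => R i j ω) * ψ (R 0 l ω) ∂ℙ :=
    fun l hl => integral_eq_setIntegral_of_map_eq (hμ n) hmeas
      (G := fun y => f y * ψ (y ⟨0, by omega⟩ ⟨l, (mem_Ico.1 hl).2⟩)) (by fun_prop)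
  have hψ₀₁ : ∫ x, ψ (x 0 1) ∂μ
      = (ℙ.real (distinctEvent σ 2))⁻¹ * ∫ ω in distinctEvent σ 2, ψ (R 0 1 ω) ∂ℙ :=
    integral_eq_setIntegral_of_map_eq (hμ 2) hmeas (G := fun y => ψ (y 0 1)) (by fun_prop)
  show ∫ x, f (fun i j : Fin n => x i j) * ψ (x 0 n) ∂μ
    = 1 / n * (∫ x, f (fun i j : Fin n => x i j) ∂μ) * (∫ x, ψ (x 0 1) ∂μ)
      + 1 / n * ∑ l ∈ Ico 1 n, ∫ x, f (fun i j : Fin n => x i j) * ψ (x 0 l) ∂μ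
  rw [hlast, integral_eq_setIntegral_of_map_eq (hμ n) hmeas hf, hψ₀₁, sum_congr rfl hmoment,
    ← mul_sum, setIntegral_distinctEvent_succ hR heq hdiag hmeas hexch (by omega) (hGG n hn)
      hf hfb hψ hψb,
    measureReal_distinctEvent_succ hR heq hdiag hmeas hexch (by omega) (hGG n hn)]
  field_simp

end ConditionedGG

theorem conditioned_array_satisfies_GG_general
    {Ω : Type*} [MeasurableSpace Ω] (ℙ : Measure Ω) [IsProbabilityMeasure ℙ]
    {H : Type*} [NormedAddCommGroup H] [InnerProductSpace ℝ H]
    (σ : ℕ → Ω → H) (R : ℕ → ℕ → Ω → ℝ) (qk pk : ℝ) (hpk1 : pk < 1)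
    (hR : ∀ l l' ω, R l l' ω = ⟪σ l ω, σ l' ω⟫)
    (hsphere : ∀ l ω, ⟪σ l ω, σ l ω⟫ = qk)
    (heq : ∀ l l', l ≠ l' → ∀ ω, (R l l' ω = qk ↔ σ l ω = σ l' ω))
    (hmeas : ∀ l l', Measurable (fun ω => R l l' ω))
    (hpk : ℙ {ω | R 0 1 ω = qk} = ENNReal.ofReal pk)
    (hexch : ∀ (m : ℕ) (ρ : Equiv.Perm (Fin m)),
      Measure.map (fun ω => fun i j : Fin m => R (ρ i) (ρ j) ω) ℙ
        = Measure.map (fun ω => fun i j : Fin m => R i j ω) ℙ)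
    (hGG : ∀ m, 2 ≤ m → ∀ f : (Fin m → Fin m → ℝ) → ℝ, Measurable f →
      (∃ C, ∀ x, |f x| ≤ C) → ∀ ψ : ℝ → ℝ, Measurable ψ → (∃ C, ∀ x, |ψ x| ≤ C) →
      ∫ ω, f (fun i j : Fin m => R i j ω) * ψ (R 0 m ω) ∂ℙ
        = (1 / m) * (∫ ω, f (fun i j : Fin m => R i j ω) ∂ℙ)
              * (∫ ω, ψ (R 0 1 ω) ∂ℙ)
          + (1 / m) * ∑ l ∈ Finset.Ico 1 m,
              ∫ ω, f (fun i j : Fin m => R i j ω) * ψ (R 0 l ω) ∂ℙ)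
    (μ : Measure (ℕ → ℕ → ℝ))
    (hμ : ∀ n, Measure.map (fun x => fun i j : Fin n => x i j) μ
      = (ℙ (distinctEvent σ n))⁻¹
          • Measure.map (fun ω => fun i j : Fin n => R i j ω)
              (ℙ.restrict (distinctEvent σ n))) :
    ∀ n, 2 ≤ n → ∀ f : (Fin n → Fin n → ℝ) → ℝ, Measurable f →
      (∃ C, ∀ x, |f x| ≤ C) → ∀ p : ℕ, 1 ≤ p →
      ∫ x, f (fun i j : Fin n => x i j) * (x 0 n) ^ p ∂μ
        = (1 / n) * (∫ x, f (fun i j : Fin n => x i j) ∂μ)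
              * (∫ x, (x 0 1) ^ p ∂μ)
          + (1 / n) * ∑ l ∈ Finset.Ico 1 n,
              ∫ x, f (fun i j : Fin n => x i j) * (x 0 l) ^ p ∂μ := by
  intro n hn f hf hfb p _
  have hbound : ∀ l l' ω, |R l l' ω| ≤ qk := fun l l' ω => by
    rw [hR]
    exact ConditionedGG.abs_real_inner_le_of_inner_self_eq (hsphere l ω) (hsphere l' ω)
  have hA₂ : ℙ.real (distinctEvent σ 2) ≠ 0 := by
    rw [ConditionedGG.measureReal_distinctEvent_two heq hmeas, measureReal_def, hpk,
      ENNReal.toReal_ofReal']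
    exact sub_ne_zero.2 (max_lt hpk1 one_pos).ne'
  -- a bounded moment function that agrees with `t ^ p` on the range `[-qk, qk]` of the overlaps
  have hGGψ := ConditionedGG.ggIdentity_conditioned hR heq
    (fun ω => (hR 0 0 ω).trans (hsphere 0 ω)) hmeas hexch hGG hA₂ hμ hn hf hfb
    (ψ := (Set.Icc (-qk) qk).indicator (· ^ p))
    ((measurable_id.pow_const p).indicator measurableSet_Icc)
    ⟨_, ConditionedGG.abs_indicator_Icc_pow_le qk p⟩
  have hGGpow : ConditionedGG.GGIdentity μ (fun i j x => x i j) n f (· ^ p) :=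
    hGGψ.congr_ae fun l => by
      filter_upwards [ConditionedGG.ae_abs_le_of_map_eq (hμ (l + 1)) hmeas hbound 0 (Fin.last l)]
        with x hx
      exact Set.indicator_of_mem (s := Set.Icc (-qk) qk) (abs_le.1 (by simpa using hx)) (· ^ p)
  exact hGGpow

/-- Lemma 2: the conditioned array `Q` (with law `μ` whose `n × n`
marginals are the conditional distributions given that all replicas are distinct) also
satisfies the Ghirlanda–Guerra identities, for moment functions `ψ(x) = x^p`, `p ≥ 1`. -/
theorem conditioned_array_satisfies_GG
    {Ω : Type*} [MeasurableSpace Ω] (ℙ : Measure Ω) [IsProbabilityMeasure ℙ]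
    {H : Type*} [NormedAddCommGroup H] [InnerProductSpace ℝ H]
    (σ : ℕ → Ω → H) (R : ℕ → ℕ → Ω → ℝ) (qk pk : ℝ) (hpk1 : pk < 1)
    (hR : ∀ l l' ω, R l l' ω = ⟪σ l ω, σ l' ω⟫)
    (hsphere : ∀ l ω, ⟪σ l ω, σ l ω⟫ = qk)
    (heq : ∀ l l', l ≠ l' → ∀ ω, (R l l' ω = qk ↔ σ l ω = σ l' ω))
    (hmeas : ∀ l l', Measurable (fun ω => R l l' ω))
    (hpk : ℙ {ω | R 0 1 ω = qk} = ENNReal.ofReal pk)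
    (hexch : ∀ (m : ℕ) (ρ : Equiv.Perm (Fin m)),
      Measure.map (fun ω => fun i j : Fin m => R (ρ i) (ρ j) ω) ℙ
        = Measure.map (fun ω => fun i j : Fin m => R i j ω) ℙ)
    (hGG : ∀ m, 2 ≤ m → ∀ f : (Fin m → Fin m → ℝ) → ℝ, Measurable f →
      (∃ C, ∀ x, |f x| ≤ C) → ∀ ψ : ℝ → ℝ, Measurable ψ → (∃ C, ∀ x, |ψ x| ≤ C) →
      ∫ ω, f (fun i j : Fin m => R i j ω) * ψ (R 0 m ω) ∂ℙ
        = (1 / m) * (∫ ω, f (fun i j : Fin m => R i j ω) ∂ℙ)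
              * (∫ ω, ψ (R 0 1 ω) ∂ℙ)
          + (1 / m) * ∑ l ∈ Finset.Ico 1 m,
              ∫ ω, f (fun i j : Fin m => R i j ω) * ψ (R 0 l ω) ∂ℙ)
    (μ : Measure (ℕ → ℕ → ℝ)) [IsProbabilityMeasure μ]
    (hμ : ∀ n, Measure.map (fun x => fun i j : Fin n => x i j) μ
      = (ℙ (distinctEvent σ n))⁻¹
          • Measure.map (fun ω => fun i j : Fin n => R i j ω)
              (ℙ.restrict (distinctEvent σ n))) :
    ∀ n, 2 ≤ n → ∀ f : (Fin n → Fin n → ℝ) → ℝ, Measurable f →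
      (∃ C, ∀ x, |f x| ≤ C) → ∀ p : ℕ, 1 ≤ p →
      ∫ x, f (fun i j : Fin n => x i j) * (x 0 n) ^ p ∂μ
        = (1 / n) * (∫ x, f (fun i j : Fin n => x i j) ∂μ)
              * (∫ x, (x 0 1) ^ p ∂μ)
          + (1 / n) * ∑ l ∈ Finset.Ico 1 n,
              ∫ x, f (fun i j : Fin n => x i j) * (x 0 l) ^ p ∂μ :=
  conditioned_array_satisfies_GG_general ℙ σ R qk pk hpk1 hR hsphere heq hmeas hpk hexch hGG μ hμ
end

section
/- Suppose R is an ultrametric random array (R_{2,3} ≥ min(R_{1,2},R_{1,3}) a.s. for all triples, in the exchangeable sense) satisfying the Ghirlanda–Guerra identities, and let q be such that P(R_{1,2} < q) > 0. Let A_{n,q} = {R_{l,l'} < q for all 1 ≤ l < l' ≤ n} and P_{n,q} the law of R^n conditioned on A_{n,q}. Then the family (P_{n,q}) is consistent and for every set B of 3×3 matrices, P_{n,q}(R^3 ∈ B) = P_{3,q}(R^3 ∈ B) for all n ≥ 3. -/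
open MeasureTheory

/-!
Write `ψ = 1_{[q, ∞)}`. By ultrametricity, on `A_n` the replica `n` overlaps `≥ q` with at most
one of the replicas `0, …, n - 1`, so `1_{A_{n+1}} = 1_{A_n} (1 - ∑_{l<n} ψ(R_{l,n}))`. For a
bounded `f`, exchangeability reduces `E[f(Rⁿ) 1_{A_n} ψ(R_{l,n})]` to the case `l = 0`, where the
Ghirlanda–Guerra identity evaluates it as `(1/n) E[f(Rⁿ) 1_{A_n}] E[ψ(R_{0,1})]`: the other terms
of the identity vanish on `A_n`. Summing over `l` gives
`E[f(Rⁿ) 1_{A_{n+1}}] = E[f(Rⁿ) 1_{A_n}] P(R_{0,1} < q)`, so conditioning on `A_{n+1}` instead of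
`A_n` does not change the law of `Rⁿ`.
-/

/-- The event that all overlaps among the first `n` replicas are `< q`. -/
def belowEvent {Ω : Type*} (R : ℕ → ℕ → Ω → ℝ) (q : ℝ) (n : ℕ) : Set Ω :=
  {ω | ∀ i j, i < j → j < n → R i j ω < q}

def offDiagBelow (q : ℝ) (n : ℕ) : Set (Fin n → Fin n → ℝ) :=
  {x | ∀ i j, i ≠ j → x i j < q}

lemma measurableSet_offDiagBelow (q : ℝ) (n : ℕ) : MeasurableSet (offDiagBelow q n) := by
  simp only [offDiagBelow, Set.ofPred_forall]
  exact .iInter fun i => .iInter fun j => .iInter fun _ =>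
    measurableSet_lt (by fun_prop) measurable_const

lemma perm_mem_offDiagBelow_iff {q : ℝ} {n : ℕ} (τ : Equiv.Perm (Fin n))
    (x : Fin n → Fin n → ℝ) :
    (fun i j => x (τ i) (τ j)) ∈ offDiagBelow q n ↔ x ∈ offDiagBelow q n := by
  refine ⟨fun h i j hij => ?_, fun h i j hij => h _ _ (τ.injective.ne hij)⟩
  simpa using h (τ.symm i) (τ.symm j) (τ.symm.injective.ne hij)

section belowEvent

variable {Ω : Type*} {R : ℕ → ℕ → Ω → ℝ} {q : ℝ}

lemma belowEvent_eq_preimage (hsymm : ∀ l l' ω, R l l' ω = R l' l ω) (n : ℕ) :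
    belowEvent R q n = (fun ω => fun i j : Fin n => R i j ω) ⁻¹' offDiagBelow q n := by
  ext ω
  refine ⟨fun h i j hij => ?_, fun h i j hij hjn => ?_⟩
  · rcases Fin.lt_or_lt_of_ne hij with hlt | hlt
    · exact h i j hlt j.isLt
    · simpa only [hsymm i] using h j i hlt i.isLt
  · simpa using h ⟨i, hij.trans hjn⟩ ⟨j, hjn⟩ (Fin.ne_of_val_ne hij.ne)

lemma measurableSet_belowEvent [MeasurableSpace Ω] (hmeas : ∀ l l', Measurable (R l l'))
    (n : ℕ) : MeasurableSet (belowEvent R q n) := by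
  simp only [belowEvent, Set.ofPred_forall]
  exact .iInter fun i => .iInter fun j => .iInter fun _ => .iInter fun _ =>
    measurableSet_lt (hmeas i j) measurable_const

lemma belowEvent_of_le_one {n : ℕ} (hn : n ≤ 1) : belowEvent R q n = Set.univ :=
  Set.eq_univ_of_forall fun _ i j hij hjn => by omega

lemma belowEvent_two : belowEvent R q 2 = {ω | R 0 1 ω < q} := by
  ext ω
  refine ⟨fun h => h 0 1 zero_lt_one one_lt_two, fun h i j hij hj => ?_⟩
  obtain ⟨rfl, rfl⟩ : i = 0 ∧ j = 1 := by omega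
  exact h

lemma belowEvent_succ (n : ℕ) :
    belowEvent R q (n + 1) = belowEvent R q n ∩ {ω | ∀ l < n, R l n ω < q} := by
  ext ω
  refine ⟨fun h => ⟨fun i j hij hj => h i j hij (by omega), fun l hl => h l n hl n.lt_succ_self⟩,
    fun ⟨h, hn⟩ i j hij hj => ?_⟩
  rcases Nat.lt_succ_iff_lt_or_eq.mp hj with hj | rfl
  exacts [h i j hij hj, hn i hij]

def IsUltrametricAt (R : ℕ → ℕ → Ω → ℝ) (ω : Ω) : Prop :=
  ∀ i j l : ℕ, i ≠ j → j ≠ l → i ≠ l → min (R i j ω) (R i l ω) ≤ R j l ω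

lemma card_filter_le_one_of_mem_belowEvent (hsymm : ∀ l l' ω, R l l' ω = R l' l ω) {n : ℕ}
    {ω : Ω} (hu : IsUltrametricAt R ω) (hω : ω ∈ belowEvent R q n) :
    (Finset.univ.filter fun l : Fin n => q ≤ R l n ω).card ≤ 1 := by
  refine Finset.card_le_one.mpr fun l hl l' hl' => Fin.ext ?_
  simp only [Finset.mem_filter, Finset.mem_univ, true_and] at hl hl'
  by_contra hne
  have hmin := hu n l l' l.isLt.ne' hne l'.isLt.ne'
  rw [hsymm n, hsymm n] at hmin
  have hq : q ≤ R l l' ω := (le_min hl hl').trans hmin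
  rcases Nat.lt_or_gt_of_ne hne with hlt | hlt
  · exact (hω l l' hlt l'.isLt).not_ge hq
  · exact (hω l' l hlt l.isLt).not_ge (hsymm l l' ω ▸ hq)

lemma indicator_belowEvent_succ (hsymm : ∀ l l' ω, R l l' ω = R l' l ω) {n : ℕ} {ω : Ω}
    (hu : IsUltrametricAt R ω) (hω : ω ∈ belowEvent R q n) :
    (belowEvent R q (n + 1)).indicator (1 : Ω → ℝ) ω
      = 1 - ∑ l : Fin n, (Set.Ici q).indicator 1 (R l n ω) := by
  have hsum : ∑ l : Fin n, (Set.Ici q).indicator (1 : ℝ → ℝ) (R l n ω)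
      = (Finset.univ.filter fun l : Fin n => q ≤ R l n ω).card := by
    simp [Set.indicator_apply, Finset.sum_boole]
  rw [hsum]
  rcases Nat.le_one_iff_eq_zero_or_eq_one.mp
    (card_filter_le_one_of_mem_belowEvent hsymm hu hω) with h0 | h1
  · have hmem : ω ∈ belowEvent R q (n + 1) := by
      rw [belowEvent_succ]
      exact ⟨hω, fun l hl => not_le.mp <|
        Finset.filter_eq_empty_iff.mp (Finset.card_eq_zero.mp h0) (Finset.mem_univ ⟨l, hl⟩)⟩
    simp [hmem, h0]
  · obtain ⟨l, hl⟩ := Finset.card_pos.mp (h1 ▸ zero_lt_one)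
    have hle : q ≤ R l n ω := (Finset.mem_filter.mp hl).2
    have hnot : ω ∉ belowEvent R q (n + 1) := fun h =>
      ((belowEvent_succ (R := R) n ▸ h).2 l l.isLt).not_ge hle
    simp [hnot, h1]

end belowEvent

lemma abs_indicator_one_le {α : Type*} (s : Set α) (a : α) : |s.indicator (1 : α → ℝ) a| ≤ 1 := by
  simpa using norm_indicator_le_norm_self (s := s) (1 : α → ℝ) a

section Exchangeable

variable {Ω : Type*} [MeasurableSpace Ω] {ℙ : Measure Ω} {R : ℕ → ℕ → Ω → ℝ}

def IsWeaklyExchangeable (ℙ : Measure Ω) (R : ℕ → ℕ → Ω → ℝ) : Prop :=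
  ∀ (m : ℕ) (ρ : Equiv.Perm (Fin m)),
    Measure.map (fun ω => fun i j : Fin m => R (ρ i) (ρ j) ω) ℙ
      = Measure.map (fun ω => fun i j : Fin m => R i j ω) ℙ

lemma IsWeaklyExchangeable.integral_comp_perm (hexch : IsWeaklyExchangeable ℙ R)
    (hmeas : ∀ l l', Measurable (R l l')) {m : ℕ} (ρ : Equiv.Perm (Fin m))
    {G : (Fin m → Fin m → ℝ) → ℝ} (hG : Measurable G) :
    ∫ ω, G (fun i j : Fin m => R (ρ i) (ρ j) ω) ∂ℙ = ∫ ω, G (fun i j : Fin m => R i j ω) ∂ℙ :=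
  (ProbabilityTheory.IdentDistrib.comp ⟨by fun_prop, by fun_prop, hexch m ρ⟩ hG).integral_eq

lemma IsWeaklyExchangeable.integral_mul_apply_swap (hexch : IsWeaklyExchangeable ℙ R)
    (hmeas : ∀ l l', Measurable (R l l')) {n : ℕ} [NeZero n] (l : Fin n)
    {g : (Fin n → Fin n → ℝ) → ℝ} {ψ : ℝ → ℝ} (hg : Measurable g) (hψ : Measurable ψ) :
    ∫ ω, g (fun i j : Fin n => R i j ω) * ψ (R l n ω) ∂ℙ
      = ∫ ω, g (fun i j : Fin n => R (Equiv.swap 0 l i) (Equiv.swap 0 l j) ω)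
          * ψ (R 0 n ω) ∂ℙ := by
  set τ := Equiv.swap (0 : Fin n) l
  have hcast (i : Fin n) : Equiv.swap 0 l.castSucc i.castSucc = (τ i).castSucc := by
    rw [(Fin.castSucc_injective n).map_swap, Fin.castSucc_zero]
  have hlast : Equiv.swap 0 l.castSucc (Fin.last n) = Fin.last n :=
    Equiv.swap_apply_of_ne_of_ne Fin.last_pos'.ne' (Fin.castSucc_lt_last l).ne'
  -- exchangeability of `R^{n+1}` under the transposition of `0` and `l`, which fixes `n`
  have h := hexch.integral_comp_perm hmeas (Equiv.swap 0 l.castSucc)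
    (G := fun x => g (fun i j => x (τ i).castSucc (τ j).castSucc) * ψ (x 0 (Fin.last n)))
    (by fun_prop)
  simpa [hcast, hlast, τ] using h

end Exchangeable

section GhirlandaGuerra

variable {Ω : Type*} [MeasurableSpace Ω] {ℙ : Measure Ω} {R : ℕ → ℕ → Ω → ℝ} {q : ℝ}

def SatisfiesGhirlandaGuerra (ℙ : Measure Ω) (R : ℕ → ℕ → Ω → ℝ) : Prop :=
  ∀ m, 2 ≤ m → ∀ f : (Fin m → Fin m → ℝ) → ℝ, Measurable f →
    (∃ C, ∀ x, |f x| ≤ C) → ∀ ψ : ℝ → ℝ, Measurable ψ → (∃ C, ∀ x, |ψ x| ≤ C) →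
    ∫ ω, f (fun i j : Fin m => R i j ω) * ψ (R 0 m ω) ∂ℙ
      = (1 / m) * (∫ ω, f (fun i j : Fin m => R i j ω) ∂ℙ) * (∫ ω, ψ (R 0 1 ω) ∂ℙ)
        + (1 / m) * ∑ l ∈ Finset.Ico 1 m, ∫ ω, f (fun i j : Fin m => R i j ω) * ψ (R 0 l ω) ∂ℙ

lemma SatisfiesGhirlandaGuerra.integral_mul_indicator_Ici_zero (hGG : SatisfiesGhirlandaGuerra ℙ R)
    {n : ℕ} (hn : 2 ≤ n) {g : (Fin n → Fin n → ℝ) → ℝ} (hg : Measurable g)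
    (hgb : ∃ C, ∀ x, |g x| ≤ C) (hsupp : Function.support g ⊆ offDiagBelow q n) :
    ∫ ω, g (fun i j : Fin n => R i j ω) * (Set.Ici q).indicator 1 (R 0 n ω) ∂ℙ
      = (1 / n) * (∫ ω, g (fun i j : Fin n => R i j ω) ∂ℙ)
          * ∫ ω, (Set.Ici q).indicator 1 (R 0 1 ω) ∂ℙ := by
  rw [hGG n hn g hg hgb _ (measurable_one.indicator measurableSet_Ici)
    ⟨1, abs_indicator_one_le _⟩, add_eq_left]
  refine mul_eq_zero_of_right _ (Finset.sum_eq_zero fun l hl => ?_)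
  obtain ⟨hl1, hln⟩ := Finset.mem_Ico.mp hl
  refine integral_eq_zero_of_ae (ae_of_all _ fun ω => ?_)
  by_cases hω : (fun i j : Fin n => R i j ω) ∈ offDiagBelow q n
  · have hlt : R 0 l ω < q := by
      simpa using hω ⟨0, by omega⟩ ⟨l, hln⟩ (Fin.ne_of_val_ne (Nat.ne_of_lt hl1))
    simp [hlt.not_ge]
  · simp [Function.notMem_support.mp (mt (@hsupp _) hω)]

lemma SatisfiesGhirlandaGuerra.integral_mul_indicator_Ici (hGG : SatisfiesGhirlandaGuerra ℙ R)
    (hexch : IsWeaklyExchangeable ℙ R) (hmeas : ∀ l l', Measurable (R l l'))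
    {n : ℕ} (hn : 2 ≤ n) (l : Fin n) {g : (Fin n → Fin n → ℝ) → ℝ} (hg : Measurable g)
    (hgb : ∃ C, ∀ x, |g x| ≤ C) (hsupp : Function.support g ⊆ offDiagBelow q n) :
    ∫ ω, g (fun i j : Fin n => R i j ω) * (Set.Ici q).indicator 1 (R l n ω) ∂ℙ
      = (1 / n) * (∫ ω, g (fun i j : Fin n => R i j ω) ∂ℙ)
          * ∫ ω, (Set.Ici q).indicator 1 (R 0 1 ω) ∂ℙ := by
  have : NeZero n := ⟨by omega⟩
  set τ := Equiv.swap (0 : Fin n) l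
  have hgτ : Measurable fun x : Fin n → Fin n → ℝ => g fun i j => x (τ i) (τ j) := by fun_prop
  have hsuppτ : Function.support (fun x : Fin n → Fin n → ℝ => g fun i j => x (τ i) (τ j))
      ⊆ offDiagBelow q n := fun x hx => (perm_mem_offDiagBelow_iff τ x).mp (hsupp hx)
  obtain ⟨C, hC⟩ := hgb
  rw [hexch.integral_mul_apply_swap hmeas l hg (measurable_one.indicator measurableSet_Ici),
    hGG.integral_mul_indicator_Ici_zero hn hgτ ⟨C, fun x => hC _⟩ hsuppτ,
    hexch.integral_comp_perm hmeas τ hg]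

end GhirlandaGuerra

section Recursion

variable {Ω : Type*} [MeasurableSpace Ω] {ℙ : Measure Ω} [IsProbabilityMeasure ℙ]
  {R : ℕ → ℕ → Ω → ℝ} {q : ℝ}

lemma integral_indicator_Ici_eq_one_sub (hR : Measurable (R 0 1)) :
    ∫ ω, (Set.Ici q).indicator 1 (R 0 1 ω) ∂ℙ = 1 - ℙ.real {ω | R 0 1 ω < q} := by
  have hcompl : {ω | R 0 1 ω < q} = (R 0 1 ⁻¹' Set.Ici q)ᶜ := by ext; simp
  rw [hcompl, probReal_compl_eq_one_sub (hR measurableSet_Ici), sub_sub_cancel,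
    ← integral_indicator_one (hR measurableSet_Ici)]
  rfl

lemma integral_mul_indicator_belowEvent_succ_of_support (hmeas : ∀ l l', Measurable (R l l'))
    (hsymm : ∀ l l' ω, R l l' ω = R l' l ω) (hexch : IsWeaklyExchangeable ℙ R)
    (hultra : ∀ᵐ ω ∂ℙ, IsUltrametricAt R ω) (hGG : SatisfiesGhirlandaGuerra ℙ R)
    {n : ℕ} (hn : 2 ≤ n) {g : (Fin n → Fin n → ℝ) → ℝ} (hg : Measurable g)
    (hgb : ∃ C, ∀ x, |g x| ≤ C) (hsupp : Function.support g ⊆ offDiagBelow q n) :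
    ∫ ω, g (fun i j : Fin n => R i j ω) * (belowEvent R q (n + 1)).indicator 1 ω ∂ℙ
      = (∫ ω, g (fun i j : Fin n => R i j ω) ∂ℙ) * ℙ.real {ω | R 0 1 ω < q} := by
  obtain ⟨C, hC⟩ := hgb
  have hdecomp : ∀ᵐ ω ∂ℙ,
      g (fun i j : Fin n => R i j ω) * (belowEvent R q (n + 1)).indicator 1 ω
        = g (fun i j : Fin n => R i j ω)
          - ∑ l : Fin n, g (fun i j : Fin n => R i j ω) * (Set.Ici q).indicator 1 (R l n ω) := by
    filter_upwards [hultra] with ω hu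
    by_cases hω : ω ∈ belowEvent R q n
    · rw [indicator_belowEvent_succ hsymm hu hω, mul_sub, mul_one, Finset.mul_sum]
    · have hg0 : g (fun i j : Fin n => R i j ω) = 0 := Function.notMem_support.mp fun h =>
        hω ((belowEvent_eq_preimage hsymm n).symm ▸ hsupp h)
      simp [hg0]
  have hint : Integrable (fun ω => g (fun i j : Fin n => R i j ω)) ℙ :=
    .of_bound (hg.comp (by fun_prop)).aestronglyMeasurable C (ae_of_all _ fun _ => hC _)
  have hint_l (l : Fin n) :
      Integrable (fun ω => g (fun i j : Fin n => R i j ω) * (Set.Ici q).indicator 1 (R l n ω)) ℙ :=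
    hint.mul_bdd
      ((measurable_one.indicator measurableSet_Ici).comp (hmeas l n)).aestronglyMeasurable
      (ae_of_all _ fun _ => abs_indicator_one_le _ _)
  rw [integral_congr_ae hdecomp, integral_sub hint (integrable_finsetSum _ fun l _ => hint_l l),
    integral_finsetSum _ fun l _ => hint_l l]
  simp_rw [hGG.integral_mul_indicator_Ici hexch hmeas hn _ hg ⟨C, hC⟩ hsupp]
  rw [Finset.sum_const, Finset.card_univ, Fintype.card_fin, nsmul_eq_mul,
    integral_indicator_Ici_eq_one_sub (hmeas 0 1)]
  field_simp
  ring

lemma integral_mul_indicator_belowEvent_succ (hmeas : ∀ l l', Measurable (R l l'))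
    (hsymm : ∀ l l' ω, R l l' ω = R l' l ω) (hdiag : ∀ l ω, R l l ω = 1)
    (hexch : IsWeaklyExchangeable ℙ R) (hultra : ∀ᵐ ω ∂ℙ, IsUltrametricAt R ω)
    (hGG : SatisfiesGhirlandaGuerra ℙ R) {n : ℕ} (hn : 1 ≤ n) {f : (Fin n → Fin n → ℝ) → ℝ}
    (hf : Measurable f) (hfb : ∃ C, ∀ x, |f x| ≤ C) :
    ∫ ω, f (fun i j : Fin n => R i j ω) * (belowEvent R q (n + 1)).indicator 1 ω ∂ℙ
      = (∫ ω, f (fun i j : Fin n => R i j ω) * (belowEvent R q n).indicator 1 ω ∂ℙ)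
          * ℙ.real {ω | R 0 1 ω < q} := by
  rcases hn.eq_or_lt with rfl | hn
  · simp [hdiag, belowEvent_two, belowEvent_of_le_one le_rfl, integral_const_mul,
      integral_indicator_one (measurableSet_lt (hmeas 0 1) measurable_const)]
  obtain ⟨C, hC⟩ := hfb
  set g : (Fin n → Fin n → ℝ) → ℝ := fun x => f x * (offDiagBelow q n).indicator 1 x
  have hg : Measurable g := hf.mul (measurable_one.indicator (measurableSet_offDiagBelow q n))
  have hgb (x : Fin n → Fin n → ℝ) : |g x| ≤ C := by
    rw [abs_mul]
    exact (mul_le_of_le_one_right (abs_nonneg _) (abs_indicator_one_le _ _)).trans (hC x)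
  have hsupp : Function.support g ⊆ offDiagBelow q n :=
    (Function.support_mul_subset_right _ _).trans Set.support_indicator_subset
  have hind : (belowEvent R q n).indicator (1 : Ω → ℝ)
      = fun ω => (offDiagBelow q n).indicator 1 (fun i j : Fin n => R i j ω) := by
    rw [belowEvent_eq_preimage hsymm]
    rfl
  have hsub : belowEvent R q (n + 1) ⊆ belowEvent R q n :=
    belowEvent_succ (R := R) n ▸ Set.inter_subset_left
  have hmul : (belowEvent R q (n + 1)).indicator (1 : Ω → ℝ)
      = (belowEvent R q n).indicator 1 * (belowEvent R q (n + 1)).indicator 1 := by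
    rw [← Set.inter_indicator_one, Set.inter_eq_right.mpr hsub]
  calc ∫ ω, f (fun i j : Fin n => R i j ω) * (belowEvent R q (n + 1)).indicator 1 ω ∂ℙ
      = ∫ ω, g (fun i j : Fin n => R i j ω) * (belowEvent R q (n + 1)).indicator 1 ω ∂ℙ := by
        conv_lhs => rw [hmul, hind]
        simp only [g, Pi.mul_apply, mul_assoc]
    _ = (∫ ω, g (fun i j : Fin n => R i j ω) ∂ℙ) * ℙ.real {ω | R 0 1 ω < q} :=
        integral_mul_indicator_belowEvent_succ_of_support hmeas hsymm hexch hultra hGG hn hg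
          ⟨C, hgb⟩ hsupp
    _ = _ := by rw [hind]

lemma measure_belowEvent_succ_inter (hmeas : ∀ l l', Measurable (R l l'))
    (hsymm : ∀ l l' ω, R l l' ω = R l' l ω) (hdiag : ∀ l ω, R l l ω = 1)
    (hexch : IsWeaklyExchangeable ℙ R) (hultra : ∀ᵐ ω ∂ℙ, IsUltrametricAt R ω)
    (hGG : SatisfiesGhirlandaGuerra ℙ R) {m n : ℕ} (hm : 1 ≤ m) (hmn : m ≤ n)
    {B : Set (Fin m → Fin m → ℝ)} (hB : MeasurableSet B) :
    ℙ (belowEvent R q (n + 1) ∩ {ω | (fun i j : Fin m => R i j ω) ∈ B})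
      = ℙ (belowEvent R q n ∩ {ω | (fun i j : Fin m => R i j ω) ∈ B})
          * ℙ {ω | R 0 1 ω < q} := by
  set E := {ω | (fun i j : Fin m => R i j ω) ∈ B}
  have hE : MeasurableSet E := (by fun_prop : Measurable fun ω => fun i j : Fin m => R i j ω) hB
  set f : (Fin n → Fin n → ℝ) → ℝ :=
    fun x => B.indicator 1 fun i j => x (Fin.castLE hmn i) (Fin.castLE hmn j)
  have hf : Measurable f := (measurable_one.indicator hB).comp (by fun_prop)
  have hintegral (k : ℕ) :
      ∫ ω, f (fun i j : Fin n => R i j ω) * (belowEvent R q k).indicator 1 ω ∂ℙ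
        = ℙ.real (belowEvent R q k ∩ E) := by
    rw [Set.inter_comm, ← integral_indicator_one (hE.inter (measurableSet_belowEvent hmeas k)),
      Set.inter_indicator_one]
    -- `f (Rⁿ ω) = 1_E ω` by unfolding, as `Fin.castLE` preserves values
    rfl
  have h := integral_mul_indicator_belowEvent_succ hmeas hsymm hdiag hexch hultra hGG
    (hm.trans hmn) hf ⟨1, fun _ => abs_indicator_one_le _ _⟩ (q := q)
  rw [hintegral, hintegral, measureReal_def, measureReal_def, measureReal_def,
    ← ENNReal.toReal_mul] at h
  exact (ENNReal.toReal_eq_toReal_iff' (measure_ne_top _ _)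
    (ENNReal.mul_ne_top (measure_ne_top _ _) (measure_ne_top _ _))).mp h

lemma measure_inter_div_belowEvent (hmeas : ∀ l l', Measurable (R l l'))
    (hsymm : ∀ l l' ω, R l l' ω = R l' l ω) (hdiag : ∀ l ω, R l l ω = 1)
    (hexch : IsWeaklyExchangeable ℙ R) (hultra : ∀ᵐ ω ∂ℙ, IsUltrametricAt R ω)
    (hGG : SatisfiesGhirlandaGuerra ℙ R) (hq : ℙ {ω | R 0 1 ω < q} ≠ 0) {m n : ℕ} (hm : 1 ≤ m)
    (hmn : m ≤ n) {B : Set (Fin m → Fin m → ℝ)} (hB : MeasurableSet B) :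
    ℙ (belowEvent R q n ∩ {ω | (fun i j : Fin m => R i j ω) ∈ B}) / ℙ (belowEvent R q n)
      = ℙ (belowEvent R q m ∩ {ω | (fun i j : Fin m => R i j ω) ∈ B}) / ℙ (belowEvent R q m) := by
  induction n, hmn using Nat.le_induction with
  | base => rfl
  | succ k hk ih =>
    have hA := measure_belowEvent_succ_inter hmeas hsymm hdiag hexch hultra hGG hm hk
      MeasurableSet.univ (q := q)
    simp only [Set.mem_univ, Set.ofPred_true, Set.inter_univ] at hA
    rw [measure_belowEvent_succ_inter hmeas hsymm hdiag hexch hultra hGG hm hk hB, hA,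
      ENNReal.mul_div_mul_right _ _ hq (measure_ne_top _ _), ih]

end Recursion

theorem ultrametric_conditional_consistency_general
    {Ω : Type*} [MeasurableSpace Ω] (ℙ : Measure Ω) [IsProbabilityMeasure ℙ]
    (R : ℕ → ℕ → Ω → ℝ) (q : ℝ)
    (hmeas : ∀ l l', Measurable (fun ω => R l l' ω))
    (hsymm : ∀ l l' ω, R l l' ω = R l' l ω)
    (hdiag : ∀ l ω, R l l ω = 1)
    (hexch : ∀ (m : ℕ) (ρ : Equiv.Perm (Fin m)),
      Measure.map (fun ω => fun i j : Fin m => R (ρ i) (ρ j) ω) ℙ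
        = Measure.map (fun ω => fun i j : Fin m => R i j ω) ℙ)
    (hultra : ∀ᵐ ω ∂ℙ, ∀ i j l : ℕ, i ≠ j → j ≠ l → i ≠ l →
      min (R i j ω) (R i l ω) ≤ R j l ω)
    (hq : 0 < ℙ {ω | R 0 1 ω < q})
    (hGG : ∀ m, 2 ≤ m → ∀ f : (Fin m → Fin m → ℝ) → ℝ, Measurable f →
      (∃ C, ∀ x, |f x| ≤ C) → ∀ ψ : ℝ → ℝ, Measurable ψ → (∃ C, ∀ x, |ψ x| ≤ C) →
      ∫ ω, f (fun i j : Fin m => R i j ω) * ψ (R 0 m ω) ∂ℙ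
        = (1 / m) * (∫ ω, f (fun i j : Fin m => R i j ω) ∂ℙ)
              * (∫ ω, ψ (R 0 1 ω) ∂ℙ)
          + (1 / m) * ∑ l ∈ Finset.Ico 1 m,
              ∫ ω, f (fun i j : Fin m => R i j ω) * ψ (R 0 l ω) ∂ℙ) :
    (∀ n, 1 ≤ n → ∀ f : (Fin n → Fin n → ℝ) → ℝ, Measurable f →
      (∃ C, ∀ x, |f x| ≤ C) →
      (∫ ω, f (fun i j : Fin n => R i j ω)
          * Set.indicator (belowEvent R q (n + 1)) (fun _ => (1 : ℝ)) ω ∂ℙ)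
        / (ℙ (belowEvent R q (n + 1))).toReal
      = (∫ ω, f (fun i j : Fin n => R i j ω)
          * Set.indicator (belowEvent R q n) (fun _ => (1 : ℝ)) ω ∂ℙ)
        / (ℙ (belowEvent R q n)).toReal) ∧
    (∀ n, 3 ≤ n → ∀ B : Set (Fin 3 → Fin 3 → ℝ), MeasurableSet B →
      ℙ (belowEvent R q n ∩ {ω | (fun i j : Fin 3 => R i j ω) ∈ B})
          / ℙ (belowEvent R q n)
        = ℙ (belowEvent R q 3 ∩ {ω | (fun i j : Fin 3 => R i j ω) ∈ B})
            / ℙ (belowEvent R q 3)) := by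
  refine ⟨fun n hn f hf hfb => ?_, fun n hn B hB =>
    measure_inter_div_belowEvent (R := R) hmeas hsymm hdiag hexch hultra hGG hq.ne' (by norm_num)
      hn hB⟩
  have hp : ℙ.real {ω | R 0 1 ω < q} ≠ 0 := (ENNReal.toReal_pos hq.ne' (measure_ne_top _ _)).ne'
  have hA := integral_mul_indicator_belowEvent_succ (R := R) (q := q) hmeas hsymm hdiag hexch
    hultra hGG hn (f := fun _ => 1) measurable_const ⟨1, by simp⟩
  simp only [one_mul, integral_indicator_one (measurableSet_belowEvent hmeas _)] at hA
  rw [show (fun _ : Ω => (1 : ℝ)) = 1 from rfl, ← measureReal_def, ← measureReal_def,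
    integral_mul_indicator_belowEvent_succ (R := R) hmeas hsymm hdiag hexch hultra hGG hn hf hfb,
    hA, mul_div_mul_right _ _ hp]

/-- if the array `R` is ultrametric (a.s., for all triples) and satisfies
the Ghirlanda–Guerra identities, and `P(R₁₂ < q) > 0`, then the conditional laws
`P_{n,q}` of `Rⁿ` given `A_{n,q} = {R_{l,l'} < q, ∀ l < l' ≤ n}` are consistent, and the
conditional law of the `3 × 3` matrix `R³` given `A_{n,q}` equals `P_{3,q}` for all
`n ≥ 3`. -/
theorem ultrametric_conditional_consistency
    {Ω : Type*} [MeasurableSpace Ω] (ℙ : Measure Ω) [IsProbabilityMeasure ℙ]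
    (R : ℕ → ℕ → Ω → ℝ) (q : ℝ)
    (hmeas : ∀ l l', Measurable (fun ω => R l l' ω))
    (hsymm : ∀ l l' ω, R l l' ω = R l' l ω)
    (hdiag : ∀ l ω, R l l ω = 1)
    (hpsd : ∀ᵐ ω ∂ℙ, ∀ n : ℕ,
      Matrix.PosSemidef (Matrix.of fun i j : Fin n => R i j ω))
    (hexch : ∀ (m : ℕ) (ρ : Equiv.Perm (Fin m)),
      Measure.map (fun ω => fun i j : Fin m => R (ρ i) (ρ j) ω) ℙ
        = Measure.map (fun ω => fun i j : Fin m => R i j ω) ℙ)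
    (hultra : ∀ᵐ ω ∂ℙ, ∀ i j l : ℕ, i ≠ j → j ≠ l → i ≠ l →
      min (R i j ω) (R i l ω) ≤ R j l ω)
    (hq : 0 < ℙ {ω | R 0 1 ω < q})
    (hGG : ∀ m, 2 ≤ m → ∀ f : (Fin m → Fin m → ℝ) → ℝ, Measurable f →
      (∃ C, ∀ x, |f x| ≤ C) → ∀ ψ : ℝ → ℝ, Measurable ψ → (∃ C, ∀ x, |ψ x| ≤ C) →
      ∫ ω, f (fun i j : Fin m => R i j ω) * ψ (R 0 m ω) ∂ℙ
        = (1 / m) * (∫ ω, f (fun i j : Fin m => R i j ω) ∂ℙ)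
              * (∫ ω, ψ (R 0 1 ω) ∂ℙ)
          + (1 / m) * ∑ l ∈ Finset.Ico 1 m,
              ∫ ω, f (fun i j : Fin m => R i j ω) * ψ (R 0 l ω) ∂ℙ) :
    (∀ n, 1 ≤ n → ∀ f : (Fin n → Fin n → ℝ) → ℝ, Measurable f →
      (∃ C, ∀ x, |f x| ≤ C) →
      (∫ ω, f (fun i j : Fin n => R i j ω)
          * Set.indicator (belowEvent R q (n + 1)) (fun _ => (1 : ℝ)) ω ∂ℙ)
        / (ℙ (belowEvent R q (n + 1))).toReal
      = (∫ ω, f (fun i j : Fin n => R i j ω)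
          * Set.indicator (belowEvent R q n) (fun _ => (1 : ℝ)) ω ∂ℙ)
        / (ℙ (belowEvent R q n)).toReal) ∧
    (∀ n, 3 ≤ n → ∀ B : Set (Fin 3 → Fin 3 → ℝ), MeasurableSet B →
      ℙ (belowEvent R q n ∩ {ω | (fun i j : Fin 3 => R i j ω) ∈ B})
          / ℙ (belowEvent R q n)
        = ℙ (belowEvent R q 3 ∩ {ω | (fun i j : Fin 3 => R i j ω) ∈ B})
            / ℙ (belowEvent R q 3)) :=
  ultrametric_conditional_consistency_general ℙ R q hmeas hsymm hdiag hexch hultra hq hGG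
end
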